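/- arXiv:0904.1530 — 7 statements merged into one kernel-verified Lean document; each statement's English description precedes it below -/
import Mathlib

section
/- Modified Pythagorean relation: let 0 < q < 1, α = 1 − 2q, κ = q(1−q), and let p, b, r ∈ 𝒮ⁿ. Let γ : [0,1] → 𝒮ⁿ be a C¹ curve with γ(0) = b, γ(1) = p such that γ_i(t)^q = a(t) b_i^q + c(t) p_i^q for all i and t, for some C¹ functions a, c ≥ 0 (a ∇^{(α)}-geodesic from b to p), and let δ : [0,1] → 𝒮ⁿ be a C¹ curve with δ(0) = b, δ(1) = r such that δ_i(t)^{1−q} = ã(t) b_i^{1−q} + c̃(t) r_i^{1−q} for some C¹ functions ã, c̃ ≥ 0 (a ∇^{(−α)}-geodesic from b to r). Assume γ'(0) ≠ 0, δ'(0) ≠ 0 and that the two curves are orthogonal at b with respect to the Fisher metric, i.e. Σ_i γ_i'(0) δ_i'(0)/b_i = 0. Then D^{(α)}(p,r) = D^{(α)}(p,b) + D^{(α)}(b,r) − κ D^{(α)}(p,b) D^{(α)}(b,r). -/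
/-!
Differentiating the geodesic equation `γ ^ q = a b ^ q + c p ^ q` at `t = 0` and using
`∑ i, γ' i = 0` gives the tangent `γ' = c' (p ^ q - X b ^ q) b ^ (1 - q) / q`, where
`X = ∑ i, p i ^ q * b i ^ (1 - q)`; dually `δ' = c̃' (r ^ (1 - q) - Y b ^ (1 - q)) b ^ q / (1 - q)`
with `Y = ∑ i, b i ^ q * r i ^ (1 - q)`. Because `b ^ q * b ^ (1 - q) = b`, the Fisher inner
product of the two tangents is `c' c̃' (Z - X Y) / (q (1 - q))` with `Z = ∑ i, p i ^ q * r i ^ (1 - q)`.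
Nonzero tangents force `c' c̃' ≠ 0`, so orthogonality means `Z = X Y`, and since
`D^{(α)} = (1 - affinity) / (q (1 - q))` this is exactly the modified Pythagorean relation.
-/

open Set

/-- The α-divergence with `q = (1-α)/2`:
`D^{(α)}(p,r) = (1/(q(1-q))) * (1 - ∑ i, p i ^ q * r i ^ (1-q))`. -/
noncomputable def alphaDiv {ι : Type*} [Fintype ι] (q : ℝ) (p r : ι → ℝ) : ℝ :=
  (1 / (q * (1 - q))) * (1 - ∑ i, p i ^ q * r i ^ (1 - q))

theorem Real.rpow_mul_rpow_one_sub {x : ℝ} (hx : 0 ≤ x) (e : ℝ) : x ^ e * x ^ (1 - e) = x := by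
  rw [← Real.rpow_add' hx (by norm_num), add_sub_cancel, Real.rpow_one]

theorem HasDerivWithinAt.eq_of_rpow_eq {f g : ℝ → ℝ} {f' g' e x : ℝ} {s : Set ℝ}
    (hf : HasDerivWithinAt f f' s x) (hg : HasDerivWithinAt g g' s x)
    (hs : UniqueDiffWithinAt ℝ s x) (hx : x ∈ s) (he : e ≠ 0) (hfx : 0 < f x)
    (heq : ∀ t ∈ s, f t ^ e = g t) : f' = g' * f x ^ (1 - e) / e := by
  have hchain : f' * e * f x ^ (e - 1) = g' :=
    hs.eq_deriv _ (hf.rpow_const (Or.inl hfx.ne')) (hg.congr_of_mem heq hx)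
  rw [← hchain, mul_assoc, mul_assoc, ← Real.rpow_add hfx]
  field_simp
  norm_num

section

variable {ι : Type*} [Fintype ι]

noncomputable def affinity (q : ℝ) (p r : ι → ℝ) : ℝ :=
  ∑ i, p i ^ q * r i ^ (1 - q)

theorem affinity_one_sub (q : ℝ) (p r : ι → ℝ) : affinity (1 - q) p r = affinity q r p := by
  simp only [affinity, sub_sub_cancel, mul_comm]

theorem affinity_self {b : ι → ℝ} (hb : ∀ i, 0 ≤ b i) (q : ℝ) : affinity q b b = ∑ i, b i := by
  simp only [affinity, Real.rpow_mul_rpow_one_sub (hb _)]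

theorem alphaDiv_eq (q : ℝ) (p r : ι → ℝ) :
    alphaDiv q p r = (1 - affinity q p r) / (q * (1 - q)) :=
  one_div_mul_eq_div _ _

theorem alphaDiv_eq_of_affinity_eq_mul {q : ℝ} {p b r : ι → ℝ}
    (h : affinity q p r = affinity q p b * affinity q b r) :
    alphaDiv q p r = alphaDiv q p b + alphaDiv q b r
      - q * (1 - q) * (alphaDiv q p b * alphaDiv q b r) := by
  simp only [alphaDiv_eq, h]
  field_simp
  ring

theorem HasDerivWithinAt.sum_eq_zero_of_sum_eq {γ : ℝ → ι → ℝ} {γ' : ι → ℝ} {s : Set ℝ}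
    {x C : ℝ} (hγ : ∀ i, HasDerivWithinAt (fun t => γ t i) (γ' i) s x)
    (hs : UniqueDiffWithinAt ℝ s x) (hx : x ∈ s) (hsum : ∀ t ∈ s, ∑ i, γ t i = C) :
    ∑ i, γ' i = 0 :=
  hs.eq_deriv _ (HasDerivWithinAt.fun_sum fun i _ => hγ i)
    ((hasDerivWithinAt_const x s C).congr_of_mem hsum hx)

theorem sum_rpow_add_mul_rpow_one_sub {b : ι → ℝ} (hb : ∀ i, 0 ≤ b i) (e A C : ℝ) (p : ι → ℝ) :
    ∑ i, (A * b i ^ e + C * p i ^ e) * b i ^ (1 - e) = A * ∑ i, b i + C * affinity e p b := by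
  simp only [affinity, add_mul, mul_assoc, Real.rpow_mul_rpow_one_sub (hb _),
    Finset.sum_add_distrib, Finset.mul_sum]

theorem geodesic_tangent_apply_eq {e x a' c' : ℝ} {s : Set ℝ} {γ : ℝ → ι → ℝ} {a c : ℝ → ℝ}
    {b p γ' : ι → ℝ} (he : e ≠ 0) (hs : UniqueDiffWithinAt ℝ s x) (hx : x ∈ s)
    (hb : ∀ i, 0 < b i) (hγx : γ x = b) (hsum : ∀ t ∈ s, ∑ i, γ t i = 1)
    (hγ : ∀ i, HasDerivWithinAt (fun t => γ t i) (γ' i) s x)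
    (ha : HasDerivWithinAt a a' s x) (hc : HasDerivWithinAt c c' s x)
    (hgeo : ∀ t ∈ s, ∀ i, γ t i ^ e = a t * b i ^ e + c t * p i ^ e) (i : ι) :
    γ' i = c' * (p i ^ e - affinity e p b * b i ^ e) * b i ^ (1 - e) / e := by
  have hγ'_eq : ∀ i, γ' i = (a' * b i ^ e + c' * p i ^ e) * b i ^ (1 - e) / e := fun i => by
    have := (hγ i).eq_of_rpow_eq ((ha.mul_const _).add (hc.mul_const _)) hs hx he
      (by simpa [hγx] using hb i) fun t ht => hgeo t ht i
    simpa [hγx] using this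
  have ha' : a' = -(c' * affinity e p b) := by
    have hbsum : ∑ i, b i = 1 := hγx ▸ hsum x hx
    have hzero := HasDerivWithinAt.sum_eq_zero_of_sum_eq hγ hs hx hsum
    simp only [hγ'_eq, ← Finset.sum_div, sum_rpow_add_mul_rpow_one_sub (fun i => (hb i).le),
      hbsum, div_eq_zero_iff, he, or_false] at hzero
    linarith
  rw [hγ'_eq, ha']
  ring

theorem sum_geodesic_tangents_mul_div {b : ι → ℝ} (hb : ∀ i, 0 < b i)
    (hbsum : ∑ i, b i = 1) (q C D : ℝ) (p r : ι → ℝ) :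
    ∑ i, (C * (p i ^ q - affinity q p b * b i ^ q) * b i ^ (1 - q) / q)
        * (D * (r i ^ (1 - q) - affinity q b r * b i ^ (1 - q)) * b i ^ q / (1 - q)) / b i
      = C * D * (affinity q p r - affinity q p b * affinity q b r) / (q * (1 - q)) := by
  set X := affinity q p b
  set Y := affinity q b r
  have hterm : ∀ i, (C * (p i ^ q - X * b i ^ q) * b i ^ (1 - q) / q)
        * (D * (r i ^ (1 - q) - Y * b i ^ (1 - q)) * b i ^ q / (1 - q)) / b i
      = C / q * (D / (1 - q)) * (p i ^ q * r i ^ (1 - q) - Y * (p i ^ q * b i ^ (1 - q))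
          - X * (b i ^ q * r i ^ (1 - q)) + X * Y * (b i ^ q * b i ^ (1 - q))) := fun i => by
    have hb_split : b i ^ q * b i ^ (1 - q) / b i = 1 := by
      rw [Real.rpow_mul_rpow_one_sub (hb i).le, div_self (hb i).ne']
    linear_combination (C / q * (D / (1 - q)) * (p i ^ q - X * b i ^ q)
      * (r i ^ (1 - q) - Y * b i ^ (1 - q))) * hb_split
  simp only [hterm, ← Finset.mul_sum, Finset.sum_add_distrib, Finset.sum_sub_distrib,
    ← affinity.eq_1, affinity_self (fun i => (hb i).le), hbsum]
  rw [div_mul_div_comm]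
  ring

end

theorem modified_pythagorean_general (n : ℕ) (q κ : ℝ) (hq0 : 0 < q) (hq1 : q < 1)
    (hκ : κ = q * (1 - q))
    (p b r : Fin (n + 1) → ℝ)
    (hb : (∀ i, 0 < b i) ∧ ∑ i, b i = 1)
    (γ δ : ℝ → Fin (n + 1) → ℝ) (a c ta tc : ℝ → ℝ)
    (hγmem : ∀ t ∈ Icc (0:ℝ) 1, (∀ i, 0 < γ t i) ∧ ∑ i, γ t i = 1)
    (hδmem : ∀ t ∈ Icc (0:ℝ) 1, (∀ i, 0 < δ t i) ∧ ∑ i, δ t i = 1)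
    (hγ0 : γ 0 = b) (hδ0 : δ 0 = b)
    (hγC1 : ∀ i, ContDiffOn ℝ 1 (fun t => γ t i) (Icc 0 1))
    (hδC1 : ∀ i, ContDiffOn ℝ 1 (fun t => δ t i) (Icc 0 1))
    (haC1 : ContDiffOn ℝ 1 a (Icc 0 1)) (hcC1 : ContDiffOn ℝ 1 c (Icc 0 1))
    (htaC1 : ContDiffOn ℝ 1 ta (Icc 0 1)) (htcC1 : ContDiffOn ℝ 1 tc (Icc 0 1))
    (hγgeo : ∀ t ∈ Icc (0:ℝ) 1, ∀ i, γ t i ^ q = a t * b i ^ q + c t * p i ^ q)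
    (hδgeo : ∀ t ∈ Icc (0:ℝ) 1, ∀ i,
      δ t i ^ (1 - q) = ta t * b i ^ (1 - q) + tc t * r i ^ (1 - q))
    (hγ' : (fun i => derivWithin (fun t => γ t i) (Icc 0 1) 0) ≠ 0)
    (hδ' : (fun i => derivWithin (fun t => δ t i) (Icc 0 1) 0) ≠ 0)
    (horth : ∑ i, derivWithin (fun t => γ t i) (Icc 0 1) 0
        * derivWithin (fun t => δ t i) (Icc 0 1) 0 / b i = 0) :
    alphaDiv q p r = alphaDiv q p b + alphaDiv q b r
      - κ * (alphaDiv q p b * alphaDiv q b r) := by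
  have h0 : (0:ℝ) ∈ Icc (0:ℝ) 1 := left_mem_Icc.2 zero_le_one
  have hU : UniqueDiffWithinAt ℝ (Icc (0:ℝ) 1) 0 := uniqueDiffOn_Icc one_pos 0 h0
  have hderiv {f : ℝ → ℝ} (hf : ContDiffOn ℝ 1 f (Icc 0 1)) :
      HasDerivWithinAt f (derivWithin f (Icc 0 1) 0) (Icc 0 1) 0 :=
    (hf.differentiableOn one_ne_zero 0 h0).hasDerivWithinAt
  have hγt := geodesic_tangent_apply_eq hq0.ne' hU h0 hb.1 hγ0
    (fun t ht => (hγmem t ht).2) (fun i => hderiv (hγC1 i)) (hderiv haC1) (hderiv hcC1) hγgeo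
  have hδt := geodesic_tangent_apply_eq (sub_ne_zero.2 hq1.ne') hU h0 hb.1 hδ0
    (fun t ht => (hδmem t ht).2) (fun i => hderiv (hδC1 i)) (hderiv htaC1) (hderiv htcC1) hδgeo
  simp only [affinity_one_sub, sub_sub_cancel] at hδt
  have hc' : derivWithin c (Icc 0 1) 0 ≠ 0 := fun h => hγ' (funext fun i => by simp [hγt i, h])
  have htc' : derivWithin tc (Icc 0 1) 0 ≠ 0 := fun h => hδ' (funext fun i => by simp [hδt i, h])
  have hκ0 : q * (1 - q) ≠ 0 := mul_ne_zero hq0.ne' (sub_ne_zero.2 hq1.ne')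
  simp only [hγt, hδt, sum_geodesic_tangents_mul_div hb.1 hb.2, div_eq_zero_iff, mul_eq_zero,
    hc', htc', hκ0, sub_eq_zero, false_or, or_false] at horth
  rw [hκ]
  exact alphaDiv_eq_of_affinity_eq_mul horth

/-- Modified Pythagorean relation: if the `∇^{(α)}`-geodesic `γ` from `b` to `p` and the
`∇^{(-α)}`-geodesic `δ` from `b` to `r` are orthogonal at `b` with respect to the Fisher
metric, then
`D^{(α)}(p,r) = D^{(α)}(p,b) + D^{(α)}(b,r) - κ D^{(α)}(p,b) D^{(α)}(b,r)` with `κ = q(1-q)`,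
`α = 1 - 2q`. -/
theorem modified_pythagorean (n : ℕ) (q α κ : ℝ) (hq0 : 0 < q) (hq1 : q < 1)
    (hα : α = 1 - 2 * q) (hκ : κ = q * (1 - q))
    (p b r : Fin (n + 1) → ℝ)
    (hp : (∀ i, 0 < p i) ∧ ∑ i, p i = 1)
    (hb : (∀ i, 0 < b i) ∧ ∑ i, b i = 1)
    (hr : (∀ i, 0 < r i) ∧ ∑ i, r i = 1)
    (γ δ : ℝ → Fin (n + 1) → ℝ) (a c ta tc : ℝ → ℝ)
    (hγmem : ∀ t ∈ Icc (0:ℝ) 1, (∀ i, 0 < γ t i) ∧ ∑ i, γ t i = 1)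
    (hδmem : ∀ t ∈ Icc (0:ℝ) 1, (∀ i, 0 < δ t i) ∧ ∑ i, δ t i = 1)
    (hγ0 : γ 0 = b) (hγ1 : γ 1 = p) (hδ0 : δ 0 = b) (hδ1 : δ 1 = r)
    (hγC1 : ∀ i, ContDiffOn ℝ 1 (fun t => γ t i) (Icc 0 1))
    (hδC1 : ∀ i, ContDiffOn ℝ 1 (fun t => δ t i) (Icc 0 1))
    (haC1 : ContDiffOn ℝ 1 a (Icc 0 1)) (hcC1 : ContDiffOn ℝ 1 c (Icc 0 1))
    (htaC1 : ContDiffOn ℝ 1 ta (Icc 0 1)) (htcC1 : ContDiffOn ℝ 1 tc (Icc 0 1))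
    (ha_nonneg : ∀ t ∈ Icc (0:ℝ) 1, 0 ≤ a t) (hc_nonneg : ∀ t ∈ Icc (0:ℝ) 1, 0 ≤ c t)
    (hta_nonneg : ∀ t ∈ Icc (0:ℝ) 1, 0 ≤ ta t) (htc_nonneg : ∀ t ∈ Icc (0:ℝ) 1, 0 ≤ tc t)
    (hγgeo : ∀ t ∈ Icc (0:ℝ) 1, ∀ i, γ t i ^ q = a t * b i ^ q + c t * p i ^ q)
    (hδgeo : ∀ t ∈ Icc (0:ℝ) 1, ∀ i,
      δ t i ^ (1 - q) = ta t * b i ^ (1 - q) + tc t * r i ^ (1 - q))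
    (hγ' : (fun i => derivWithin (fun t => γ t i) (Icc 0 1) 0) ≠ 0)
    (hδ' : (fun i => derivWithin (fun t => δ t i) (Icc 0 1) 0) ≠ 0)
    (horth : ∑ i, derivWithin (fun t => γ t i) (Icc 0 1) 0
        * derivWithin (fun t => δ t i) (Icc 0 1) 0 / b i = 0) :
    alphaDiv q p r = alphaDiv q p b + alphaDiv q b r
      - κ * (alphaDiv q p b * alphaDiv q b r) :=
  modified_pythagorean_general n q κ hq0 hq1 hκ p b r hb γ δ a c ta tc hγmem hδmem hγ0 hδ0 hγC1 hδC1
    haC1 hcC1 htaC1 htcC1 hγgeo hδgeo hγ' hδ' horth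
end

section
/- α-convexity of the q-expectation constraint set: let 0 < q < 1, let A_1,…,A_{n+1} be reals and Ā ≥ 0. If p, r ∈ 𝒮ⁿ satisfy Σ_i p_i^q A_i ≥ Ā and Σ_i r_i^q A_i ≥ Ā, and s ∈ 𝒮ⁿ satisfies s_i^q = β₁ p_i^q + β₂ r_i^q for all i, for some β₁, β₂ ≥ 0, then Σ_i s_i^q A_i ≥ Ā. (That is, the set ℋ_q⁺ = {p ∈ 𝒮ⁿ : ⟨A⟩_q ≥ Ā} is ∇^{(α)}-convex, where ⟨A⟩_q = Σ_i p_i^q A_i.) -/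
/-!
Along an `α`-geodesic the weights satisfy `β₁ + β₂ ≥ 1`: otherwise concavity of `x ↦ x ^ q`,
together with `0 ^ q = 0`, would give `s i ≤ β₁ * p i + β₂ * r i` for every `i`, and summing
yields `1 ≤ β₁ + β₂` anyway. Since the `q`-expectation is linear in `s ^ q`, the `q`-expectation
under `s` is `β₁ ⟨A⟩_p + β₂ ⟨A⟩_r ≥ (β₁ + β₂) Ā ≥ Ā`, using `Ā ≥ 0`.
-/

open Finset Real

theorem ConcaveOn.smul_add_smul_le_map_of_add_le_one {𝕜 E β : Type*} [Field 𝕜] [LinearOrder 𝕜]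
    [IsStrictOrderedRing 𝕜] [AddCommGroup E] [AddCommGroup β] [PartialOrder β]
    [IsOrderedAddMonoid β] [Module 𝕜 E] [Module 𝕜 β] [IsStrictOrderedModule 𝕜 β]
    {s : Set E} {f : E → β} (hf : ConcaveOn 𝕜 s f) (h0 : (0 : E) ∈ s) (hf0 : 0 ≤ f 0)
    {x y : E} (hx : x ∈ s) (hy : y ∈ s) {a b : 𝕜} (ha : 0 ≤ a) (hb : 0 ≤ b) (hab : a + b ≤ 1) :
    a • f x + b • f y ≤ f (a • x + b • y) := by
  have h := hf.map_add_sum_le (t := univ) (w := ![a, b]) (p := ![x, y]) (v := 1 - (a + b))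
    (by simp [Fin.forall_fin_two, ha, hb]) (by simp [Fin.sum_univ_two])
    (by simp [Fin.forall_fin_two, hx, hy]) (sub_nonneg.2 hab) h0
  simp only [Fin.sum_univ_two, smul_zero, zero_add] at h
  simpa using (le_add_of_nonneg_left (smul_nonneg (sub_nonneg.2 hab) hf0)).trans h

theorem one_le_add_of_rpow_eq_mul_rpow_add_mul_rpow {ι : Type*} [Fintype ι] {q : ℝ}
    (hq0 : 0 < q) (hq1 : q ≤ 1) {p r s : ι → ℝ} (hp : ∀ i, 0 ≤ p i) (hr : ∀ i, 0 ≤ r i)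
    (hs : ∀ i, 0 ≤ s i) (hp_sum : ∑ i, p i = 1) (hr_sum : ∑ i, r i = 1) (hs_sum : ∑ i, s i = 1)
    {β₁ β₂ : ℝ} (hβ₁ : 0 ≤ β₁) (hβ₂ : 0 ≤ β₂)
    (hgeo : ∀ i, s i ^ q = β₁ * p i ^ q + β₂ * r i ^ q) :
    1 ≤ β₁ + β₂ := by
  rcases le_total (β₁ + β₂) 1 with hβ | hβ
  · have hs_le : ∀ i, s i ≤ β₁ * p i + β₂ * r i := fun i ↦ by
      have hconc := (concaveOn_rpow hq0.le hq1).smul_add_smul_le_map_of_add_le_one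
        Set.self_mem_Ici (rpow_nonneg le_rfl q) (hp i) (hr i) hβ₁ hβ₂ hβ
      rw [← rpow_le_rpow_iff (hs i) (by have := hp i; have := hr i; positivity) hq0, hgeo i]
      simpa only [smul_eq_mul] using hconc
    calc 1 = ∑ i, s i := hs_sum.symm
      _ ≤ ∑ i, (β₁ * p i + β₂ * r i) := sum_le_sum fun i _ ↦ hs_le i
      _ = β₁ + β₂ := by rw [sum_add_distrib, ← mul_sum, ← mul_sum, hp_sum, hr_sum, mul_one, mul_one]
  · exact hβ

/-- α-convexity of the q-expectation constraint set `ℋ_q⁺ = {p : ⟨A⟩_q ≥ Ā}` for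
`0 < q < 1` and `Ā ≥ 0`: any point `s` of the `∇^{(α)}`-geodesic through two points
`p, r` of `ℋ_q⁺` again lies in `ℋ_q⁺`. -/
theorem q_expectation_set_alpha_convex (n : ℕ) (q : ℝ) (hq0 : 0 < q) (hq1 : q < 1)
    (A : Fin (n + 1) → ℝ) (Abar : ℝ) (hAbar : 0 ≤ Abar)
    (p r s : Fin (n + 1) → ℝ)
    (hp_pos : ∀ i, 0 < p i) (hp_sum : ∑ i, p i = 1)
    (hr_pos : ∀ i, 0 < r i) (hr_sum : ∑ i, r i = 1)
    (hs_pos : ∀ i, 0 < s i) (hs_sum : ∑ i, s i = 1)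
    (hpA : Abar ≤ ∑ i, p i ^ q * A i) (hrA : Abar ≤ ∑ i, r i ^ q * A i)
    (β₁ β₂ : ℝ) (hβ₁ : 0 ≤ β₁) (hβ₂ : 0 ≤ β₂)
    (hgeo : ∀ i, s i ^ q = β₁ * p i ^ q + β₂ * r i ^ q) :
    Abar ≤ ∑ i, s i ^ q * A i := by
  have hβ : 1 ≤ β₁ + β₂ :=
    one_le_add_of_rpow_eq_mul_rpow_add_mul_rpow hq0 hq1.le (fun i ↦ (hp_pos i).le)
      (fun i ↦ (hr_pos i).le) (fun i ↦ (hs_pos i).le) hp_sum hr_sum hs_sum hβ₁ hβ₂ hgeo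
  have hs_exp : ∑ i, s i ^ q * A i = β₁ * ∑ i, p i ^ q * A i + β₂ * ∑ i, r i ^ q * A i := by
    simp only [hgeo, add_mul, sum_add_distrib, mul_sum, mul_assoc]
  rw [hs_exp]
  nlinarith [mul_le_mul_of_nonneg_left hpA hβ₁, mul_le_mul_of_nonneg_left hrA hβ₂]
end

section
/- The q-expectation level set is a D^{(α)}-sphere: let 0 < q < 1 and A_1,…,A_{n+1} > 0, and set ε = Σ_i ((1−q)A_i)^{1/(1−q)}, r_i = ((1−q)A_i)^{1/(1−q)}/ε for each i, and d = (1/q)(1/(1−q) − ε^{q−1} Ā). Then r ∈ 𝒮ⁿ, and for every p ∈ 𝒮ⁿ one has Σ_i p_i^q A_i = Ā if and only if D^{(α)}(p,r) = d, where α = 1 − 2q. -/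
open Finset

theorem alphaDiv_eq_of_rpow_center {ι : Type*} [Fintype ι] {q ε : ℝ} (hq : q < 1) (hε : 0 ≤ ε) {A : ι → ℝ}
    (hA : ∀ i, 0 ≤ A i) (p : ι → ℝ) :
    alphaDiv q p (fun i => ((1 - q) * A i) ^ (1 / (1 - q)) / ε)
      = (1 / q) * (1 / (1 - q) - ε ^ (q - 1) * ∑ i, p i ^ q * A i) := by
  have h1q : 0 < 1 - q := by linarith
  have hcenter : ∀ i, (((1 - q) * A i) ^ (1 / (1 - q)) / ε) ^ (1 - q)
      = (1 - q) * ε ^ (q - 1) * A i := fun i => by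
    have hAi : 0 ≤ (1 - q) * A i := mul_nonneg h1q.le (hA i)
    rw [Real.div_rpow (Real.rpow_nonneg hAi _) hε, one_div, Real.rpow_inv_rpow hAi h1q.ne',
      show q - 1 = -(1 - q) by ring, Real.rpow_neg hε]
    ring
  simp only [alphaDiv, hcenter, mul_left_comm _ ((1 - q) * ε ^ (q - 1)), ← mul_sum]
  field_simp

theorem q_expectation_level_set_is_sphere_general (n : ℕ) (q : ℝ) (hq0 : 0 < q) (hq1 : q < 1)
    (A : Fin (n + 1) → ℝ) (hA : ∀ i, 0 < A i) (Abar : ℝ)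
    (ε : ℝ) (hε : ε = ∑ i, ((1 - q) * A i) ^ (1 / (1 - q)))
    (r : Fin (n + 1) → ℝ) (hr : ∀ i, r i = ((1 - q) * A i) ^ (1 / (1 - q)) / ε)
    (d : ℝ) (hd : d = (1 / q) * (1 / (1 - q) - ε ^ (q - 1) * Abar)) :
    ((∀ i, 0 < r i) ∧ ∑ i, r i = 1)
    ∧ ∀ p : Fin (n + 1) → ℝ, (∀ i, 0 < p i) → (∑ i, p i = 1) →
        ((∑ i, p i ^ q * A i = Abar) ↔ alphaDiv q p r = d) := by
  have hweight : ∀ i, 0 < ((1 - q) * A i) ^ (1 / (1 - q)) := fun i =>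
    Real.rpow_pos_of_pos (mul_pos (by linarith) (hA i)) _
  have hεpos : 0 < ε := hε ▸ sum_pos (fun i _ => hweight i) univ_nonempty
  obtain rfl : r = fun i => ((1 - q) * A i) ^ (1 / (1 - q)) / ε := funext hr
  refine ⟨⟨fun i => div_pos (hweight i) hεpos, by rw [← sum_div, ← hε, div_self hεpos.ne']⟩,
    fun p _ _ => ?_⟩
  rw [alphaDiv_eq_of_rpow_center hq1 hεpos.le (fun i => (hA i).le), hd,
    mul_right_inj' (one_div_ne_zero hq0.ne'), sub_right_inj,
    mul_right_inj' (Real.rpow_pos_of_pos hεpos _).ne']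

/-- The q-expectation level set `{p : ∑ i, p i ^ q * A i = Ā}` is a `D^{(α)}`-sphere
(with `α = 1 - 2q`) centered at `r_i = ((1-q)A_i)^{1/(1-q)}/ε` of radius
`d = (1/q)(1/(1-q) - ε^{q-1} Ā)`, where `ε = ∑ i, ((1-q)A_i)^{1/(1-q)}`. -/
theorem q_expectation_level_set_is_sphere (n : ℕ) (q α : ℝ) (hq0 : 0 < q) (hq1 : q < 1)
    (hα : α = 1 - 2 * q)
    (A : Fin (n + 1) → ℝ) (hA : ∀ i, 0 < A i) (Abar : ℝ)
    (ε : ℝ) (hε : ε = ∑ i, ((1 - q) * A i) ^ (1 / (1 - q)))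
    (r : Fin (n + 1) → ℝ) (hr : ∀ i, r i = ((1 - q) * A i) ^ (1 / (1 - q)) / ε)
    (d : ℝ) (hd : d = (1 / q) * (1 / (1 - q) - ε ^ (q - 1) * Abar)) :
    ((∀ i, 0 < r i) ∧ ∑ i, r i = 1)
    ∧ ∀ p : Fin (n + 1) → ℝ, (∀ i, 0 < p i) → (∑ i, p i = 1) →
        ((∑ i, p i ^ q * A i = Abar) ↔ alphaDiv q p r = d) :=
  q_expectation_level_set_is_sphere_general n q hq0 hq1 A hA Abar ε hε r hr d hd
end

section
/- The trajectory of the Fisher-gradient flow of the α-divergence is a ∇^{(−α)}-geodesic: let 0 < q < 1, fix r ∈ 𝒮ⁿ, and let p : [0,T) → 𝒮ⁿ be a differentiable curve with p(0) = p₀ solving, for every i = 1,…,n+1, the ODE dp_i/dt = (1/(1−q)) ( p_i(t)^q r_i^{1−q} − p_i(t) Σ_j p_j(t)^q r_j^{1−q} ), which is the gradient flow of p ↦ D^{(α)}(p,r) on 𝒮ⁿ with respect to the Fisher metric (α = 1 − 2q). Then for every t ∈ [0,T) there exist a(t), b(t) ≥ 0 such that p_i(t)^{1−q} = a(t) (p₀)_i^{1−q}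 + b(t) r_i^{1−q} for all i; i.e. the trajectory lies on the ∇^{(−α)}-geodesic curve connecting p₀ and r. -/
/-!
Substituting `u_i = p_i ^ (1 - q)` turns each coordinate equation of the flow, a Bernoulli
equation, into the linear equation `u_i' = r_i ^ (1 - q) - C(t) u_i`, where
`C(t) = ∑ j, p_j(t) ^ q * r_j ^ (1 - q)` is the same for every `i`. Variation of constants with
`E(t) = exp (∫₀ᵗ C)` gives `u_i(t) = (u_i(0) + r_i ^ (1 - q) ∫₀ᵗ E) / E(t)`, so
`a = 1 / E(t)` and `b = (∫₀ᵗ E) / E(t)` work for all `i` at once.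
-/

open Set Real

section LinearODE

variable {f u C : ℝ → ℝ} {a b c : ℝ}

theorem hasDerivWithinAt_integral_Icc (hf : ContinuousOn f (Icc a b)) {x : ℝ}
    (hx : x ∈ Icc a b) :
    HasDerivWithinAt (fun t => ∫ s in a..t, f s) (f x) (Icc a b) x := by
  have : Fact (x ∈ Icc a b) := ⟨hx⟩
  exact intervalIntegral.integral_hasDerivWithinAt_right
    ((hf.mono (Icc_subset_Icc_right hx.2)).intervalIntegrable_of_Icc hx.1)
    (hf.stronglyMeasurableAtFilter_nhdsWithin measurableSet_Icc x) (hf x hx)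

theorem eq_of_hasDerivWithinAt_zero_Icc (hab : a ≤ b)
    (hf : ∀ x ∈ Icc a b, HasDerivWithinAt f 0 (Icc a b) x) : f b = f a :=
  constant_of_has_deriv_right_zero (fun x hx => (hf x hx).continuousWithinAt)
    (fun x hx => (hf x (Ico_subset_Icc_self hx)).mono_of_mem_nhdsWithin
      (Icc_mem_nhdsGE_of_mem hx)) b ⟨hab, le_rfl⟩

/-- `exp (∫ C)` is an integrating factor: `u * exp (∫ C) - c * ∫ exp (∫ C)` has zero derivative. -/
theorem eq_div_exp_integral_of_hasDerivWithinAt (hab : a ≤ b) (hC : ContinuousOn C (Icc a b))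
    (hu : ∀ x ∈ Icc a b, HasDerivWithinAt u (c - C x * u x) (Icc a b) x) :
    u b = (u a + c * ∫ s in a..b, exp (∫ v in a..s, C v)) / exp (∫ v in a..b, C v) := by
  set E : ℝ → ℝ := fun s => exp (∫ v in a..s, C v)
  set F : ℝ → ℝ := fun t => ∫ s in a..t, E s
  have hE : ∀ x ∈ Icc a b, HasDerivWithinAt E (E x * C x) (Icc a b) x :=
    fun x hx => (hasDerivWithinAt_integral_Icc hC hx).exp
  have hF : ∀ x ∈ Icc a b, HasDerivWithinAt F (E x) (Icc a b) x :=
    fun x => hasDerivWithinAt_integral_Icc fun y hy => (hE y hy).continuousWithinAt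
  have key : u b * E b - c * F b = u a * E a - c * F a :=
    eq_of_hasDerivWithinAt_zero_Icc (f := fun x => u x * E x - c * F x) hab fun x hx => by
      refine (((hu x hx).mul (hE x hx)).sub ((hF x hx).const_mul c)).congr_deriv ?_
      ring
  simp only [E, F, intervalIntegral.integral_same, exp_zero] at key
  rw [eq_div_iff (exp_pos _).ne']
  linarith

end LinearODE

theorem HasDerivWithinAt.bernoulli_rpow_one_sub {x : ℝ → ℝ} {s : Set ℝ} {t q c C : ℝ}
    (h : HasDerivWithinAt x (1 / (1 - q) * (x t ^ q * c - x t * C)) s t) (hq : q ≠ 1)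
    (hx : 0 < x t) :
    HasDerivWithinAt (fun s => x s ^ (1 - q)) (c - C * x t ^ (1 - q)) s t := by
  convert h.rpow_const (p := 1 - q) (Or.inl hx.ne') using 1
  have hq' : 1 - q ≠ 0 := sub_ne_zero.2 hq.symm
  have hcancel : x t ^ q * x t ^ (-q) = 1 := by rw [← rpow_add hx, add_neg_cancel, rpow_zero]
  have hmul : x t * x t ^ (-q) = x t ^ (1 - q) := by
    rw [sub_eq_add_neg, rpow_add hx, rpow_one]
  rw [sub_sub_cancel_left]
  field_simp
  linear_combination C * hmul - c * hcancel

theorem gradient_flow_is_dual_geodesic_general (n : ℕ) (q : ℝ) (hq1 : q < 1)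
    (r : Fin (n + 1) → ℝ)
    (T : ℝ)
    (p : ℝ → Fin (n + 1) → ℝ) (p₀ : Fin (n + 1) → ℝ) (hp0 : p 0 = p₀)
    (hmem : ∀ t ∈ Ico (0:ℝ) T, (∀ i, 0 < p t i) ∧ ∑ i, p t i = 1)
    (hode : ∀ t ∈ Ico (0:ℝ) T, ∀ i,
      HasDerivWithinAt (fun s => p s i)
        ((1 / (1 - q)) * (p t i ^ q * r i ^ (1 - q)
          - p t i * ∑ j, p t j ^ q * r j ^ (1 - q)))
        (Ico 0 T) t) :
    ∀ t ∈ Ico (0:ℝ) T, ∃ a b : ℝ, 0 ≤ a ∧ 0 ≤ b ∧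
      ∀ i, p t i ^ (1 - q) = a * p₀ i ^ (1 - q) + b * r i ^ (1 - q) := by
  intro t ht
  have hsub : Icc 0 t ⊆ Ico 0 T := Icc_subset_Ico_right ht.2
  set C : ℝ → ℝ := fun s => ∑ j, p s j ^ q * r j ^ (1 - q)
  have hC : ContinuousOn C (Icc 0 t) := continuousOn_finsetSum _ fun j _ =>
    (ContinuousOn.rpow_const (fun s hs => ((hode s (hsub hs) j).continuousWithinAt.mono hsub))
      fun s hs => Or.inl ((hmem s (hsub hs)).1 j).ne').mul continuousOn_const
  set E : ℝ → ℝ := fun s => exp (∫ v in 0..s, C v)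
  have hE : 0 < E t := exp_pos _
  have hp : ∀ i, p t i ^ (1 - q) = (p 0 i ^ (1 - q) + r i ^ (1 - q) * ∫ s in 0..t, E s) / E t :=
    fun i => eq_div_exp_integral_of_hasDerivWithinAt ht.1 hC fun s hs =>
      ((hode s (hsub hs) i).bernoulli_rpow_one_sub hq1.ne ((hmem s (hsub hs)).1 i)).mono hsub
  refine ⟨1 / E t, (∫ s in 0..t, E s) / E t, by positivity,
    div_nonneg (intervalIntegral.integral_nonneg ht.1 fun _ _ => (exp_pos _).le) hE.le,
    fun i => ?_⟩
  rw [hp i, hp0]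
  ring

/-- The trajectory of the Fisher-gradient flow of the α-divergence `p ↦ D^{(α)}(p,r)`
(`α = 1 - 2q`, `0 < q < 1`) lies on the `∇^{(-α)}`-geodesic connecting the initial point
`p₀` and the target `r`: for every `t` there are `a(t), b(t) ≥ 0` with
`p_i(t)^{1-q} = a(t) (p₀)_i^{1-q} + b(t) r_i^{1-q}` for all `i`. -/
theorem gradient_flow_is_dual_geodesic (n : ℕ) (q : ℝ) (hq0 : 0 < q) (hq1 : q < 1)
    (r : Fin (n + 1) → ℝ) (hr_pos : ∀ i, 0 < r i) (hr_sum : ∑ i, r i = 1)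
    (T : ℝ) (hT : 0 < T)
    (p : ℝ → Fin (n + 1) → ℝ) (p₀ : Fin (n + 1) → ℝ) (hp0 : p 0 = p₀)
    (hmem : ∀ t ∈ Ico (0:ℝ) T, (∀ i, 0 < p t i) ∧ ∑ i, p t i = 1)
    (hode : ∀ t ∈ Ico (0:ℝ) T, ∀ i,
      HasDerivWithinAt (fun s => p s i)
        ((1 / (1 - q)) * (p t i ^ q * r i ^ (1 - q)
          - p t i * ∑ j, p t j ^ q * r j ^ (1 - q)))
        (Ico 0 T) t) :
    ∀ t ∈ Ico (0:ℝ) T, ∃ a b : ℝ, 0 ≤ a ∧ 0 ≤ b ∧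
      ∀ i, p t i ^ (1 - q) = a * p₀ i ^ (1 - q) + b * r i ^ (1 - q) :=
  gradient_flow_is_dual_geodesic_general n q hq1 r T p p₀ hp0 hmem hode
end

section
/- Constants of motion of the gradient flow: let 0 < q < 1, fix r ∈ 𝒮ⁿ, and let p : [0,T) → 𝒮ⁿ be a differentiable curve with p(0) = p₀ solving dp_i/dt = (1/(1−q)) ( p_i(t)^q r_i^{1−q} − p_i(t) Σ_j p_j(t)^q r_j^{1−q} ) for all i. Then for every vector θ = (θ^1,…,θ^{n+1}) ∈ ℝ^{n+1} satisfying Σ_i θ^i (p₀)_i^{1−q} = 0 and Σ_i θ^i r_i^{1−q} = 0, the quantity C(t) = Σ_i θ^i p_i(t)^{1−q}/(1−q) is constant in t (equal to 0 for all t ∈ [0,T)). -/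
/-!
Write `S t = ∑ j, p t j ^ q * r j ^ (1 - q)`. In the dual coordinates `p_i ^ (1 - q)` the flow
becomes `d/dt p_i ^ (1 - q) = r_i ^ (1 - q) - p_i ^ (1 - q) S`, so for `θ ⟂ r ^ (1 - q)` the
function `g = ∑ i, θ i * p_i ^ (1 - q)` solves the linear equation `g' = -S g`. Since `S` is
continuous, it is bounded on every `[0, t] ⊆ [0, T)`, and Grönwall's inequality with `g 0 = 0`
forces `g = 0`.
-/

open Set

theorem eq_zero_of_hasDerivWithinAt_eq_mul_self {g k : ℝ → ℝ} {a b : ℝ}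
    (hk : ContinuousOn k (Ico a b))
    (hg : ∀ t ∈ Ico a b, HasDerivWithinAt g (k t * g t) (Ico a b) t) (ha : g a = 0) :
    ∀ t ∈ Ico a b, g t = 0 := by
  intro t ht
  have hsub : Icc a t ⊆ Ico a b := fun x hx => ⟨hx.1, hx.2.trans_lt ht.2⟩
  obtain ⟨C, hC⟩ := isCompact_Icc.exists_bound_of_continuousOn (hk.mono hsub)
  have hcont : ContinuousOn g (Icc a t) := fun x hx =>
    (hg x (hsub hx)).continuousWithinAt.mono hsub
  have hright : ∀ x ∈ Ico a t, HasDerivWithinAt g (k x * g x) (Ici x) x := by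
    intro x hx
    have hx' : x ∈ Ico a b := hsub (Ico_subset_Icc_self hx)
    refine (hg x hx').mono_of_mem_nhdsWithin ?_
    filter_upwards [mem_nhdsWithin_of_mem_nhds (Iio_mem_nhds hx'.2), self_mem_nhdsWithin]
      with y hyb hyx using ⟨hx'.1.trans hyx, hyb⟩
  refine eq_zero_of_abs_deriv_le_mul_abs_self_of_eq_zero_right (K := C) hcont hright ha
    (fun x hx => ?_) t (right_mem_Icc.mpr ht.1)
  rw [norm_mul]
  exact mul_le_mul_of_nonneg_right (hC x (Ico_subset_Icc_self hx)) (norm_nonneg _)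

theorem HasDerivWithinAt.rpow_one_sub_of_flow {f : ℝ → ℝ} {s : Set ℝ} {t q c S : ℝ}
    (hq : q ≠ 1) (hpos : 0 < f t)
    (hf : HasDerivWithinAt f ((1 / (1 - q)) * (f t ^ q * c - f t * S)) s t) :
    HasDerivWithinAt (fun u => f u ^ (1 - q)) (c - f t ^ (1 - q) * S) s t := by
  convert hf.rpow_const (p := 1 - q) (Or.inl hpos.ne') using 1
  have hq' : (1 : ℝ) - q ≠ 0 := sub_ne_zero.mpr hq.symm
  have hcancel : f t ^ q * f t ^ (1 - q - 1) = 1 := by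
    rw [← Real.rpow_add hpos, show q + (1 - q - 1) = 0 by ring, Real.rpow_zero]
  have hshift : f t * f t ^ (1 - q - 1) = f t ^ (1 - q) := by
    have hexp : (1 : ℝ) + (1 - q - 1) = 1 - q := by ring
    rw [← Real.rpow_one_add' hpos.le (by rwa [hexp]), hexp]
  field_simp
  linear_combination (-c) * hcancel + S * hshift

theorem gradient_flow_constants_of_motion_general (n : ℕ) (q : ℝ) (hq1 : q < 1)
    (r : Fin (n + 1) → ℝ)
    (T : ℝ)
    (p : ℝ → Fin (n + 1) → ℝ) (p₀ : Fin (n + 1) → ℝ) (hp0 : p 0 = p₀)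
    (hmem : ∀ t ∈ Ico (0:ℝ) T, (∀ i, 0 < p t i) ∧ ∑ i, p t i = 1)
    (hode : ∀ t ∈ Ico (0:ℝ) T, ∀ i,
      HasDerivWithinAt (fun s => p s i)
        ((1 / (1 - q)) * (p t i ^ q * r i ^ (1 - q)
          - p t i * ∑ j, p t j ^ q * r j ^ (1 - q)))
        (Ico 0 T) t)
    (θ : Fin (n + 1) → ℝ)
    (hθ0 : ∑ i, θ i * p₀ i ^ (1 - q) = 0)
    (hθr : ∑ i, θ i * r i ^ (1 - q) = 0) :
    ∀ t ∈ Ico (0:ℝ) T, ∑ i, θ i * p t i ^ (1 - q) / (1 - q) = 0 := by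
  set S : ℝ → ℝ := fun t => ∑ j, p t j ^ q * r j ^ (1 - q)
  have hS : ContinuousOn S (Ico 0 T) := continuousOn_finsetSum _ fun j _ t ht =>
    ((hode t ht j).continuousWithinAt.rpow_const (Or.inl ((hmem t ht).1 j).ne')).mul
      continuousWithinAt_const
  have hderiv : ∀ t ∈ Ico (0:ℝ) T, HasDerivWithinAt (fun s => ∑ i, θ i * p s i ^ (1 - q))
      (-S t * ∑ i, θ i * p t i ^ (1 - q)) (Ico 0 T) t := by
    intro t ht
    refine (HasDerivWithinAt.fun_sum fun i _ => ((hode t ht i).rpow_one_sub_of_flow hq1.ne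
      ((hmem t ht).1 i)).const_mul (θ i)).congr_deriv ?_
    simp only [S, mul_sub, Finset.sum_sub_distrib, hθr, ← mul_assoc, ← Finset.sum_mul]
    ring
  intro t ht
  rw [← Finset.sum_div, eq_zero_of_hasDerivWithinAt_eq_mul_self hS.neg hderiv
    (by simp [hp0, hθ0]) t ht, zero_div]

/-- Constants of motion of the Fisher-gradient flow of the α-divergence: for any vector
`θ` with `∑ i, θ i * (p₀ i)^{1-q} = 0` and `∑ i, θ i * (r i)^{1-q} = 0`, the quantity
`C(t) = ∑ i, θ i * (p t i)^{1-q} / (1 - q)` is constant (equal to `0`) along the flow. -/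
theorem gradient_flow_constants_of_motion (n : ℕ) (q : ℝ) (hq0 : 0 < q) (hq1 : q < 1)
    (r : Fin (n + 1) → ℝ) (hr_pos : ∀ i, 0 < r i) (hr_sum : ∑ i, r i = 1)
    (T : ℝ) (hT : 0 < T)
    (p : ℝ → Fin (n + 1) → ℝ) (p₀ : Fin (n + 1) → ℝ) (hp0 : p 0 = p₀)
    (hmem : ∀ t ∈ Ico (0:ℝ) T, (∀ i, 0 < p t i) ∧ ∑ i, p t i = 1)
    (hode : ∀ t ∈ Ico (0:ℝ) T, ∀ i,
      HasDerivWithinAt (fun s => p s i)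
        ((1 / (1 - q)) * (p t i ^ q * r i ^ (1 - q)
          - p t i * ∑ j, p t j ^ q * r j ^ (1 - q)))
        (Ico 0 T) t)
    (θ : Fin (n + 1) → ℝ)
    (hθ0 : ∑ i, θ i * p₀ i ^ (1 - q) = 0)
    (hθr : ∑ i, θ i * r i ^ (1 - q) = 0) :
    ∀ t ∈ Ico (0:ℝ) T, ∑ i, θ i * p t i ^ (1 - q) / (1 - q) = 0 :=
  gradient_flow_constants_of_motion_general n q hq1 r T p p₀ hp0 hmem hode θ hθ0 hθr
end

section
/- Divergence to a moment-matching q-Gaussian equals the entropy gap (maximum entropy property): let 1 < m < 2researchers, q = 2 − m ∈ (0,1). Let r : ℝⁿ → ℝ be a q-Gaussian probability density, r(x) = (c + (1−q)(θᵀx + xᵀΘx))^{1/(1−q)} on P = { x : c + (1−q)(θᵀx + xᵀΘx) > 0 } and r = 0 off P, with Θ symmetric negative definite and ∫ r = 1. Let p be a probability density on ℝⁿ with p = 0 almost everywhere off P, with finite first and second moments equal to those of r (∫ x p dx = ∫ x r dx and ∫ x xᵀ p dx = ∫ x xᵀ r dx), and with ∫ p^m dx < ∞. Then 𝔇[p‖r]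 = ( ∫ p^m dx − ∫ r^m dx ) / ( m(m−1) ) = ℑ[r] − ℑ[p], and consequently 𝔇[p‖r] ≥ 0 and ℑ[r] ≥ ℑ[p], with equality if and only if p = r almost everywhere; i.e. the q-Gaussian maximizes the generalized entropy ℑ among all densities with the same first and second moments. -/
/-!
For the quadratic polynomial `Q = c + (m - 1)(θᵀx + xᵀΘx)` one has `r ^ (m - 1) = max 0 Q`, and `p`
vanishes where `Q ≤ 0`, so the cross term `∫ p r ^ (m - 1) = ∫ p Q` only depends on the mass and
the first two moments of `p`. As `-Θ` is positive definite, `r` has bounded support, hence finite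
moments, and the same computation gives `∫ p Q = ∫ r Q = ∫ r ^ m`. The Bregman divergence is
`1 / (m (m - 1))` times the integral of the gap between `t ↦ t ^ m` and its tangent at `r`, so it
collapses to `(∫ p ^ m - ∫ r ^ m) / (m (m - 1))`; by strict convexity the gap vanishes exactly
where `p = r`.
-/

open MeasureTheory Matrix

/-- The Bregman divergence
`𝔇[p‖r] = ∫ ((r^{2-q} - p^{2-q})/(2-q) - p (r^{1-q} - p^{1-q})/(1-q)) dx`. -/
noncomputable def BregmanDiv (n : ℕ) (q : ℝ) (p r : (Fin n → ℝ) → ℝ) : ℝ :=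
  ∫ x, ((r x ^ (2 - q) - p x ^ (2 - q)) / (2 - q)
        - p x * (r x ^ (1 - q) - p x ^ (1 - q)) / (1 - q))

/-- The generalized entropy `ℑ[p] = ∫ (p^{2-q} - p)/((q-1)(2-q)) dx`. -/
noncomputable def genEntropy (n : ℕ) (q : ℝ) (p : (Fin n → ℝ) → ℝ) : ℝ :=
  ∫ x, (p x ^ (2 - q) - p x) / ((q - 1) * (2 - q))

lemma mul_rpow_sub_one_eq_rpow {a m : ℝ} (ha : 0 ≤ a) (hm : m ≠ 0) : a * a ^ (m - 1) = a ^ m := by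
  rw [← Real.rpow_one_add' ha (by rwa [add_sub_cancel]), add_sub_cancel]

noncomputable def bregmanGap (m a b : ℝ) : ℝ := a ^ m - b ^ m - m * b ^ (m - 1) * (a - b)

lemma bregmanGap_pos {m a b : ℝ} (hm : 1 < m) (ha : 0 ≤ a) (hb : 0 ≤ b) (hab : a ≠ b) :
    0 < bregmanGap m a b := by
  unfold bregmanGap
  rcases hb.eq_or_lt with rfl | hb
  · rw [Real.zero_rpow (by linarith), Real.zero_rpow (by linarith)]
    simpa using Real.rpow_pos_of_pos (ha.lt_of_ne' hab) m
  have hs : -1 ≤ a / b - 1 := by linarith [div_nonneg ha hb.le]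
  have hs' : a / b - 1 ≠ 0 := by rwa [sub_ne_zero, ne_eq, div_eq_one_iff_eq hb.ne']
  have bernoulli := one_add_mul_self_lt_rpow_one_add hs hs' hm
  rw [add_sub_cancel, Real.div_rpow ha hb.le, lt_div_iff₀ (Real.rpow_pos_of_pos hb m),
    ← mul_rpow_sub_one_eq_rpow hb.le (by linarith)] at bernoulli
  rw [← mul_rpow_sub_one_eq_rpow hb.le (by linarith)]
  have hscale : (1 + m * (a / b - 1)) * (b * b ^ (m - 1))
      = b * b ^ (m - 1) + m * b ^ (m - 1) * (a - b) := by
    field_simp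
  linarith

lemma bregmanGap_self (m a : ℝ) : bregmanGap m a a = 0 := by
  simp [bregmanGap]

lemma bregmanGap_nonneg {m a b : ℝ} (hm : 1 < m) (ha : 0 ≤ a) (hb : 0 ≤ b) :
    0 ≤ bregmanGap m a b := by
  rcases eq_or_ne a b with rfl | hab
  · exact (bregmanGap_self m a).ge
  · exact (bregmanGap_pos hm ha hb hab).le

lemma bregmanGap_eq_zero_iff {m a b : ℝ} (hm : 1 < m) (ha : 0 ≤ a) (hb : 0 ≤ b) :
    bregmanGap m a b = 0 ↔ a = b :=
  ⟨fun h => by_contra fun hab => (bregmanGap_pos hm ha hb hab).ne' h,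
    fun h => h ▸ bregmanGap_self m a⟩

lemma bregmanGap_eq {m a b : ℝ} (hm : m ≠ 0) (hb : 0 ≤ b) :
    bregmanGap m a b = a ^ m + (m - 1) * b ^ m - m * (a * b ^ (m - 1)) := by
  rw [bregmanGap, ← mul_rpow_sub_one_eq_rpow hb hm]
  ring

section BregmanDivergence

variable {n : ℕ} {m : ℝ} {p r : (Fin n → ℝ) → ℝ}

lemma bregmanDiv_eq_integral_bregmanGap (hm : 1 < m) (hp : ∀ x, 0 ≤ p x) (hr : ∀ x, 0 ≤ r x) :
    BregmanDiv n (2 - m) p r = (∫ x, bregmanGap m (p x) (r x)) / (m * (m - 1)) := by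
  have hm0 : m ≠ 0 := by linarith
  have hm1 : m - 1 ≠ 0 := by linarith
  rw [BregmanDiv, ← integral_div]
  congr 1 with x
  rw [show (2 : ℝ) - (2 - m) = m by ring, show (1 : ℝ) - (2 - m) = m - 1 by ring,
    bregmanGap_eq hm0 (hr x), mul_sub, mul_rpow_sub_one_eq_rpow (hp x) hm0]
  field_simp
  ring

lemma integrable_bregmanGap (hm : m ≠ 0) (hr : ∀ x, 0 ≤ r x)
    (hpm : Integrable (fun x => p x ^ m)) (hrm : Integrable (fun x => r x ^ m))
    (hpr : Integrable (fun x => p x * r x ^ (m - 1))) :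
    Integrable (fun x => bregmanGap m (p x) (r x)) := by
  simp_rw [bregmanGap_eq hm (hr _)]
  exact (hpm.add (hrm.const_mul _)).sub (hpr.const_mul m)

lemma integral_bregmanGap (hm : m ≠ 0) (hr : ∀ x, 0 ≤ r x)
    (hpm : Integrable (fun x => p x ^ m)) (hrm : Integrable (fun x => r x ^ m))
    (hpr : Integrable (fun x => p x * r x ^ (m - 1))) :
    ∫ x, bregmanGap m (p x) (r x) =
      (∫ x, p x ^ m) + (m - 1) * (∫ x, r x ^ m) - m * ∫ x, p x * r x ^ (m - 1) := by
  have hsum : Integrable (fun x => p x ^ m + (m - 1) * r x ^ m) := hpm.add (hrm.const_mul _)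
  simp_rw [bregmanGap_eq hm (hr _)]
  rw [integral_sub hsum (hpr.const_mul m), integral_add hpm (hrm.const_mul _),
    integral_const_mul, integral_const_mul]

lemma bregmanDiv_nonneg (hm : 1 < m) (hp : ∀ x, 0 ≤ p x) (hr : ∀ x, 0 ≤ r x) :
    0 ≤ BregmanDiv n (2 - m) p r := by
  rw [bregmanDiv_eq_integral_bregmanGap hm hp hr]
  exact div_nonneg (integral_nonneg fun x => bregmanGap_nonneg hm (hp x) (hr x))
    (by nlinarith)

lemma bregmanDiv_eq_zero_iff (hm : 1 < m) (hp : ∀ x, 0 ≤ p x) (hr : ∀ x, 0 ≤ r x)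
    (hgap : Integrable (fun x => bregmanGap m (p x) (r x))) :
    BregmanDiv n (2 - m) p r = 0 ↔ p =ᵐ[volume] r := by
  rw [bregmanDiv_eq_integral_bregmanGap hm hp hr, div_eq_zero_iff, or_iff_left (by nlinarith),
    integral_eq_zero_iff_of_nonneg (fun x => bregmanGap_nonneg hm (hp x) (hr x)) hgap]
  exact Filter.eventually_congr (.of_forall fun x => bregmanGap_eq_zero_iff hm (hp x) (hr x))

lemma genEntropy_eq (f : (Fin n → ℝ) → ℝ) (hf : Integrable f)
    (hfm : Integrable (fun x => f x ^ m)) :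
    genEntropy n (2 - m) f = ((∫ x, f x ^ m) - ∫ x, f x) / ((1 - m) * m) := by
  rw [genEntropy, integral_div, show (2 : ℝ) - (2 - m) = m by ring,
    show (2 : ℝ) - m - 1 = 1 - m by ring, integral_sub hfm hf]

end BregmanDivergence

section Quadratic

variable {ι : Type*} [Fintype ι]

lemma Matrix.PosDef.exists_mul_norm_sq_le {M : Matrix ι ι ℝ} (hM : M.PosDef) :
    ∃ ε > 0, ∀ x : ι → ℝ, ε * ‖x‖ ^ 2 ≤ x ⬝ᵥ M *ᵥ x := by
  rcases isEmpty_or_nonempty ι with _ | _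
  · exact ⟨1, one_pos, fun x => by simp [Subsingleton.elim x 0]⟩
  have hQ : Continuous fun y : ι → ℝ => y ⬝ᵥ M *ᵥ y := by fun_prop
  obtain ⟨y₀, hy₀, hmin⟩ := (isCompact_sphere (0 : ι → ℝ) 1).exists_isMinOn
    (NormedSpace.sphere_nonempty.mpr zero_le_one) hQ.continuousOn
  have hy₀ : y₀ ≠ 0 := ne_zero_of_mem_unit_sphere ⟨y₀, hy₀⟩
  refine ⟨y₀ ⬝ᵥ M *ᵥ y₀, by simpa using hM.dotProduct_mulVec_pos hy₀, fun x => ?_⟩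
  rcases eq_or_ne x 0 with rfl | hx
  · simp
  have hx' : ‖x‖ ≠ 0 := norm_ne_zero_iff.mpr hx
  have h : y₀ ⬝ᵥ M *ᵥ y₀ ≤ (‖x‖⁻¹ • x) ⬝ᵥ M *ᵥ (‖x‖⁻¹ • x) :=
    hmin (show ‖x‖⁻¹ • x ∈ Metric.sphere (0 : ι → ℝ) 1 by simp [norm_smul, hx'])
  simp only [mulVec_smul, dotProduct_smul, smul_dotProduct, smul_eq_mul] at h
  calc y₀ ⬝ᵥ M *ᵥ y₀ * ‖x‖ ^ 2 ≤ ‖x‖⁻¹ * (‖x‖⁻¹ * (x ⬝ᵥ M *ᵥ x)) * ‖x‖ ^ 2 := by gcongr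
    _ = x ⬝ᵥ M *ᵥ x := by field_simp

lemma exists_norm_le_of_quadratic_pos {Θ : Matrix ι ι ℝ} (hΘ : (-Θ).PosDef) (c : ℝ) (θ : ι → ℝ) :
    ∃ R, ∀ x : ι → ℝ, 0 < c + θ ⬝ᵥ x + x ⬝ᵥ Θ *ᵥ x → ‖x‖ ≤ R := by
  obtain ⟨ε, hε, hcoer⟩ := hΘ.exists_mul_norm_sq_le
  set T := ∑ i, |θ i|
  refine ⟨max 1 ((|c| + T) / ε), fun x hx => ?_⟩
  by_contra! hR
  have hlin : θ ⬝ᵥ x ≤ T * ‖x‖ := by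
    rw [Finset.sum_mul]
    refine Finset.sum_le_sum fun i _ => (le_abs_self _).trans ?_
    rw [abs_mul]
    gcongr
    exact norm_le_pi_norm x i
  have hquad : ε * ‖x‖ ^ 2 ≤ -(x ⬝ᵥ Θ *ᵥ x) := by
    simpa [neg_mulVec, dotProduct_neg] using hcoer x
  have h1 : 1 < ‖x‖ := (le_max_left _ _).trans_lt hR
  have h2 : |c| + T < ε * ‖x‖ := by
    rw [← div_lt_iff₀' hε]
    exact (le_max_right _ _).trans_lt hR
  nlinarith [le_abs_self c, abs_nonneg c]

end Quadratic

lemma MeasureTheory.Integrable.continuous_mul_of_norm_le {E : Type*} [NormedAddCommGroup E]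
    [ProperSpace E] [MeasurableSpace E] [OpensMeasurableSpace E] {μ : Measure E} {f g : E → ℝ} {R : ℝ}
    (hf : Integrable f μ) (hg : Continuous g) (hR : ∀ x, f x ≠ 0 → ‖x‖ ≤ R) :
    Integrable (fun x => g x * f x) μ := by
  obtain ⟨C, hC⟩ := (isCompact_closedBall (0 : E) R).exists_bound_of_continuousOn hg.continuousOn
  refine (hf.norm.const_mul C).mono' (hg.aestronglyMeasurable.mul hf.aestronglyMeasurable)
    (.of_forall fun x => ?_)
  rw [norm_mul]
  by_cases hx : f x = 0
  · simp [hx]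
  · exact mul_le_mul_of_nonneg_right (hC x (mem_closedBall_zero_iff.mpr (hR x hx))) (norm_nonneg _)

section Moments

variable {ι : Type*} [Fintype ι] [MeasurableSpace (ι → ℝ)] {μ : Measure (ι → ℝ)}
  {f g : (ι → ℝ) → ℝ}

lemma integral_mul_quadratic (hf : Integrable f μ) (hf₁ : ∀ i, Integrable (fun x => x i * f x) μ)
    (hf₂ : ∀ i j, Integrable (fun x => x i * x j * f x) μ) (c : ℝ) (θ : ι → ℝ)
    (Θ : Matrix ι ι ℝ) :
    Integrable (fun x => f x * (c + θ ⬝ᵥ x + x ⬝ᵥ Θ *ᵥ x)) μ ∧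
      ∫ x, f x * (c + θ ⬝ᵥ x + x ⬝ᵥ Θ *ᵥ x) ∂μ = c * (∫ x, f x ∂μ)
        + ∑ i, θ i * (∫ x, x i * f x ∂μ) + ∑ i, ∑ j, Θ i j * ∫ x, x i * x j * f x ∂μ := by
  have hexpand : ∀ x, f x * (c + θ ⬝ᵥ x + x ⬝ᵥ Θ *ᵥ x) = c * f x
      + ∑ i, θ i * (x i * f x) + ∑ i, ∑ j, Θ i j * (x i * x j * f x) := fun x => by
    simp only [dotProduct, mulVec, mul_add, Finset.mul_sum]
    ac_rfl
  have hlin : ∀ i ∈ Finset.univ, Integrable (fun x => θ i * (x i * f x)) μ :=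
    fun i _ => (hf₁ i).const_mul _
  have hquad : ∀ i j, Integrable (fun x => Θ i j * (x i * x j * f x)) μ :=
    fun i j => (hf₂ i j).const_mul _
  have hquad' : ∀ i ∈ Finset.univ, Integrable (fun x => ∑ j, Θ i j * (x i * x j * f x)) μ :=
    fun i _ => integrable_finsetSum _ fun j _ => hquad i j
  have hconst : Integrable (fun x => c * f x) μ := hf.const_mul c
  have hlinSum : Integrable (fun x => ∑ i, θ i * (x i * f x)) μ := integrable_finsetSum _ hlin
  have hquadSum : Integrable (fun x => ∑ i, ∑ j, Θ i j * (x i * x j * f x)) μ :=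
    integrable_finsetSum _ hquad'
  have hfirst : Integrable (fun x => c * f x + ∑ i, θ i * (x i * f x)) μ := hconst.add hlinSum
  simp_rw [hexpand]
  refine ⟨hfirst.add hquadSum, ?_⟩
  rw [integral_add hfirst hquadSum, integral_add hconst hlinSum, integral_finsetSum _ hlin,
    integral_finsetSum _ hquad']
  simp only [integral_finsetSum _ fun j _ => hquad _ j, integral_const_mul]

lemma integral_mul_quadratic_eq_of_moments_eq
    (hf : Integrable f μ) (hf₁ : ∀ i, Integrable (fun x => x i * f x) μ)
    (hf₂ : ∀ i j, Integrable (fun x => x i * x j * f x) μ)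
    (hg : Integrable g μ) (hg₁ : ∀ i, Integrable (fun x => x i * g x) μ)
    (hg₂ : ∀ i j, Integrable (fun x => x i * x j * g x) μ)
    (h₀ : ∫ x, f x ∂μ = ∫ x, g x ∂μ) (h₁ : ∀ i, ∫ x, x i * f x ∂μ = ∫ x, x i * g x ∂μ)
    (h₂ : ∀ i j, ∫ x, x i * x j * f x ∂μ = ∫ x, x i * x j * g x ∂μ)
    (c : ℝ) (θ : ι → ℝ) (Θ : Matrix ι ι ℝ) :
    ∫ x, f x * (c + θ ⬝ᵥ x + x ⬝ᵥ Θ *ᵥ x) ∂μ = ∫ x, g x * (c + θ ⬝ᵥ x + x ⬝ᵥ Θ *ᵥ x) ∂μ := by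
  rw [(integral_mul_quadratic hf hf₁ hf₂ c θ Θ).2, (integral_mul_quadratic hg hg₁ hg₂ c θ Θ).2, h₀]
  simp only [h₁, h₂]

end Moments

lemma integral_mul_rpow_qGaussian_eq {n : ℕ} {m c : ℝ} {θ : Fin n → ℝ}
    {Θ : Matrix (Fin n) (Fin n) ℝ} (hm : 1 < m) (hΘ : (-Θ).PosDef) {p r : (Fin n → ℝ) → ℝ}
    (hr : ∀ x, r x = max 0 (c + θ ⬝ᵥ x + x ⬝ᵥ Θ *ᵥ x) ^ (1 / (m - 1))) (hr_int : Integrable r)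
    (hp_int : Integrable p) (hp_supp : ∀ᵐ x ∂volume, c + θ ⬝ᵥ x + x ⬝ᵥ Θ *ᵥ x ≤ 0 → p x = 0)
    (hp₁ : ∀ i, Integrable (fun x => x i * p x))
    (hp₂ : ∀ i j, Integrable (fun x => x i * x j * p x))
    (h₀ : ∫ x, p x = ∫ x, r x) (h₁ : ∀ i, ∫ x, x i * p x = ∫ x, x i * r x)
    (h₂ : ∀ i j, ∫ x, x i * x j * p x = ∫ x, x i * x j * r x) :
    Integrable (fun x => p x * r x ^ (m - 1)) ∧ ∫ x, p x * r x ^ (m - 1) = ∫ x, r x ^ m := by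
  set Q : (Fin n → ℝ) → ℝ := fun x => c + θ ⬝ᵥ x + x ⬝ᵥ Θ *ᵥ x
  have hm₁ : m - 1 ≠ 0 := by linarith
  have hr_nonneg : ∀ x, 0 ≤ r x := fun x => (hr x).symm ▸ Real.rpow_nonneg (le_max_left _ _) _
  have hr_pow : ∀ x, r x ^ (m - 1) = max 0 (Q x) := fun x => by
    rw [hr, one_div, Real.rpow_inv_rpow (le_max_left _ _) hm₁]
  have hr_supp : ∀ x, r x ≠ 0 → 0 < Q x := fun x hx => by
    by_contra! hQx
    rw [hr, max_eq_left hQx, Real.zero_rpow (by simpa using hm₁)] at hx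
    exact hx rfl
  have hrQ : ∀ x, r x ^ m = r x * Q x := fun x => by
    by_cases hx : r x = 0
    · simp [hx, Real.zero_rpow (by linarith : m ≠ 0)]
    · rw [← mul_rpow_sub_one_eq_rpow (hr_nonneg x) (by linarith), hr_pow,
        max_eq_right (hr_supp x hx).le]
  have hpQ : (fun x => p x * r x ^ (m - 1)) =ᵐ[volume] fun x => p x * Q x := by
    filter_upwards [hp_supp] with x hx
    rcases le_or_gt (Q x) 0 with hQx | hQx
    · simp [hx hQx]
    · rw [hr_pow, max_eq_right hQx.le]
  obtain ⟨R, hR⟩ := exists_norm_le_of_quadratic_pos hΘ c θ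
  have hr_bdd : ∀ x, r x ≠ 0 → ‖x‖ ≤ R := fun x hx => hR x (hr_supp x hx)
  have hr₁ : ∀ i, Integrable (fun x => x i * r x) := fun i =>
    hr_int.continuous_mul_of_norm_le (continuous_apply i) hr_bdd
  have hr₂ : ∀ i j, Integrable (fun x => x i * x j * r x) := fun i j =>
    hr_int.continuous_mul_of_norm_le (by fun_prop) hr_bdd
  refine ⟨(integral_mul_quadratic hp_int hp₁ hp₂ c θ Θ).1.congr hpQ.symm, ?_⟩
  calc ∫ x, p x * r x ^ (m - 1) = ∫ x, p x * Q x := integral_congr_ae hpQ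
    _ = ∫ x, r x * Q x :=
      integral_mul_quadratic_eq_of_moments_eq hp_int hp₁ hp₂ hr_int hr₁ hr₂ h₀ h₁ h₂ c θ Θ
    _ = ∫ x, r x ^ m := by simp_rw [hrQ]

theorem divergence_to_qGaussian_eq_entropy_gap_general (n : ℕ) (m q : ℝ)
    (hm1 : 1 < m) (hq : q = 2 - m)
    (c : ℝ) (θ : Fin n → ℝ) (Θ : Matrix (Fin n) (Fin n) ℝ)
    (hΘneg : (-Θ).PosDef)
    (r : (Fin n → ℝ) → ℝ)
    (hr : ∀ x, r x = max 0 (c + (1 - q) * (θ ⬝ᵥ x + x ⬝ᵥ Θ.mulVec x)) ^ (1 / (1 - q)))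
    (hr_int : Integrable r) (hr_mass : ∫ x, r x = 1)
    (hrm_int : Integrable (fun x => r x ^ m))
    (p : (Fin n → ℝ) → ℝ)
    (hp_nonneg : ∀ x, 0 ≤ p x) (hp_int : Integrable p) (hp_mass : ∫ x, p x = 1)
    (hp_supp : ∀ᵐ x ∂volume, c + (1 - q) * (θ ⬝ᵥ x + x ⬝ᵥ Θ.mulVec x) ≤ 0 → p x = 0)
    (hpm_int : Integrable (fun x => p x ^ m))
    (hp_mom1_int : ∀ i, Integrable (fun x => x i * p x))
    (hp_mom2_int : ∀ i j, Integrable (fun x => x i * x j * p x))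
    (hmom1 : ∀ i, (∫ x, x i * p x) = ∫ x, x i * r x)
    (hmom2 : ∀ i j, (∫ x, x i * x j * p x) = ∫ x, x i * x j * r x) :
    BregmanDiv n q p r = ((∫ x, p x ^ m) - ∫ x, r x ^ m) / (m * (m - 1))
    ∧ BregmanDiv n q p r = genEntropy n q r - genEntropy n q p
    ∧ 0 ≤ BregmanDiv n q p r
    ∧ genEntropy n q p ≤ genEntropy n q r
    ∧ (BregmanDiv n q p r = 0 ↔ p =ᵐ[volume] r) := by
  subst hq
  have hm0 : m ≠ 0 := by linarith
  have hQ : ∀ x, c + (1 - (2 - m)) * (θ ⬝ᵥ x + x ⬝ᵥ Θ *ᵥ x)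
      = c + ((m - 1) • θ) ⬝ᵥ x + x ⬝ᵥ ((m - 1) • Θ) *ᵥ x := fun x => by
    simp only [smul_dotProduct, smul_mulVec, dotProduct_smul, smul_eq_mul]
    ring
  simp only [hQ] at hr hp_supp
  simp only [show (1 : ℝ) - (2 - m) = m - 1 by ring] at hr
  have hr_nonneg : ∀ x, 0 ≤ r x := fun x => (hr x).symm ▸ Real.rpow_nonneg (le_max_left _ _) _
  obtain ⟨hpr_int, hpr⟩ := integral_mul_rpow_qGaussian_eq hm1
    (by simpa using hΘneg.smul (by linarith : 0 < m - 1)) hr hr_int hp_int hp_supp hp_mom1_int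
    hp_mom2_int (hp_mass.trans hr_mass.symm) hmom1 hmom2
  have hD : BregmanDiv n (2 - m) p r = ((∫ x, p x ^ m) - ∫ x, r x ^ m) / (m * (m - 1)) := by
    rw [bregmanDiv_eq_integral_bregmanGap hm1 hp_nonneg hr_nonneg,
      integral_bregmanGap hm0 hr_nonneg hpm_int hrm_int hpr_int, hpr]
    ring
  have hD' : BregmanDiv n (2 - m) p r = genEntropy n (2 - m) r - genEntropy n (2 - m) p := by
    have hm₁ : m - 1 ≠ 0 := by linarith
    have hm₁' : 1 - m ≠ 0 := by linarith
    rw [hD, genEntropy_eq r hr_int hrm_int, genEntropy_eq p hp_int hpm_int, hp_mass, hr_mass]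
    field_simp
    ring
  have hD₀ := bregmanDiv_nonneg hm1 hp_nonneg hr_nonneg
  exact ⟨hD, hD', hD₀, by linarith, bregmanDiv_eq_zero_iff hm1 hp_nonneg hr_nonneg
    (integrable_bregmanGap hm0 hr_nonneg hpm_int hrm_int hpr_int)⟩

/-- Divergence to a moment-matching q-Gaussian equals the entropy gap (maximum entropy
property of the q-Gaussian): `𝔇[p‖r] = (∫p^m - ∫r^m)/(m(m-1)) = ℑ[r] - ℑ[p] ≥ 0`, with
equality iff `p = r` a.e. -/
theorem divergence_to_qGaussian_eq_entropy_gap (n : ℕ) (m q : ℝ)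
    (hm1 : 1 < m) (hm2 : m < 2) (hq : q = 2 - m)
    (c : ℝ) (θ : Fin n → ℝ) (Θ : Matrix (Fin n) (Fin n) ℝ)
    (hΘsymm : Θ.IsSymm) (hΘneg : (-Θ).PosDef)
    (r : (Fin n → ℝ) → ℝ)
    (hr : ∀ x, r x = max 0 (c + (1 - q) * (θ ⬝ᵥ x + x ⬝ᵥ Θ.mulVec x)) ^ (1 / (1 - q)))
    (hr_int : Integrable r) (hr_mass : ∫ x, r x = 1)
    (hrm_int : Integrable (fun x => r x ^ m))
    (p : (Fin n → ℝ) → ℝ)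
    (hp_nonneg : ∀ x, 0 ≤ p x) (hp_int : Integrable p) (hp_mass : ∫ x, p x = 1)
    (hp_supp : ∀ᵐ x ∂volume, c + (1 - q) * (θ ⬝ᵥ x + x ⬝ᵥ Θ.mulVec x) ≤ 0 → p x = 0)
    (hpm_int : Integrable (fun x => p x ^ m))
    (hp_mom1_int : ∀ i, Integrable (fun x => x i * p x))
    (hp_mom2_int : ∀ i j, Integrable (fun x => x i * x j * p x))
    (hmom1 : ∀ i, (∫ x, x i * p x) = ∫ x, x i * r x)
    (hmom2 : ∀ i j, (∫ x, x i * x j * p x) = ∫ x, x i * x j * r x) :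
    BregmanDiv n q p r = ((∫ x, p x ^ m) - ∫ x, r x ^ m) / (m * (m - 1))
    ∧ BregmanDiv n q p r = genEntropy n q r - genEntropy n q p
    ∧ 0 ≤ BregmanDiv n q p r
    ∧ genEntropy n q p ≤ genEntropy n q r
    ∧ (BregmanDiv n q p r = 0 ↔ p =ᵐ[volume] r) :=
  divergence_to_qGaussian_eq_entropy_gap_general n m q hm1 hq c θ Θ hΘneg r hr hr_int hr_mass
    hrm_int p hp_nonneg hp_int hp_mass hp_supp hpm_int hp_mom1_int hp_mom2_int hmom1 hmom2
end

section
/- Triangular (generalized Pythagorean) equality for the m-projection onto the q-Gaussian family: let 1 < m < 2, q = 2 − m ∈ (0,1). Let p be a probability density on ℝⁿ with finite first and second moments and ∫ p^m < ∞, let r be a q-Gaussian probability density with the same first and second moments as p and with p = 0 almost everywhere outside { r > 0 }, and let s be any q-Gaussian probability density with p = 0 and r = 0 almost everywhere outside { s > 0 } (and all relevant integrals finite). Then 𝔇[p‖s] = 𝔇[p‖r] + 𝔇[r‖s]. -/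
/-!
The three Bregman integrands satisfy the pointwise algebraic identity
`d(p,s) - d(p,r) - d(r,s) = (p - r) (r^{1-q} - s^{1-q}) / (1-q)`.
Where a q-Gaussian is positive, its `(1-q)`-th power is the quadratic polynomial in its exponent,
and the support conditions make `p - r` vanish a.e. elsewhere. Hence the defect is the integral of
a quadratic polynomial against `p - r`, which vanishes because `p` and `r` have the same mass and
first and second moments. Those moments of `r` are finite since `-Θ₁ > 0` gives `r` bounded support.
-/

open MeasureTheory Matrix

noncomputable def bregmanIntegrand (q a b : ℝ) : ℝ :=
  (b ^ (2 - q) - a ^ (2 - q)) / (2 - q) - a * (b ^ (1 - q) - a ^ (1 - q)) / (1 - q)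

theorem bregmanIntegrand_sub_sub (q a b c : ℝ) :
    bregmanIntegrand q a c - bregmanIntegrand q a b - bregmanIntegrand q b c
      = (a - b) * (b ^ (1 - q) - c ^ (1 - q)) / (1 - q) := by
  unfold bregmanIntegrand
  ring

theorem bregmanDiv_sub_sub_eq_integral {n : ℕ} {q : ℝ} {p r s : (Fin n → ℝ) → ℝ}
    (hps : Integrable fun x => bregmanIntegrand q (p x) (s x))
    (hpr : Integrable fun x => bregmanIntegrand q (p x) (r x))
    (hrs : Integrable fun x => bregmanIntegrand q (r x) (s x)) :
    BregmanDiv n q p s - BregmanDiv n q p r - BregmanDiv n q r s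
      = ∫ x, (p x - r x) * (r x ^ (1 - q) - s x ^ (1 - q)) / (1 - q) := by
  change (∫ x, bregmanIntegrand q (p x) (s x)) - (∫ x, bregmanIntegrand q (p x) (r x))
    - (∫ x, bregmanIntegrand q (r x) (s x)) = _
  rw [← integral_sub hps hpr, ← integral_sub (by exact hps.sub hpr) hrs]
  simp only [bregmanIntegrand_sub_sub]

theorem pos_of_eq_max_zero_rpow {t a y : ℝ} (ht : t ≠ 0) (hy : y = max 0 a ^ (1 / t))
    (hy0 : y ≠ 0) : 0 < a := by
  by_contra! ha
  rw [max_eq_left ha, Real.zero_rpow (one_div_ne_zero ht)] at hy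
  exact hy0 hy

theorem rpow_eq_of_eq_max_zero_rpow {t a y : ℝ} (ht : t ≠ 0) (hy : y = max 0 a ^ (1 / t))
    (hy0 : y ≠ 0) : y ^ t = a := by
  have ha := (pos_of_eq_max_zero_rpow ht hy hy0).le
  rw [hy, max_eq_right ha, one_div, Real.rpow_inv_rpow ha ht]

theorem ae_sub_mul_rpow_sub_eq {α : Type*} [MeasurableSpace α] {μ : Measure α}
    {p r s A B : α → ℝ} {t : ℝ} (ht : t ≠ 0)
    (hr : ∀ x, r x = max 0 (A x) ^ (1 / t)) (hs : ∀ x, s x = max 0 (B x) ^ (1 / t))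
    (hpr : ∀ᵐ x ∂μ, r x = 0 → p x = 0) (hrs : ∀ᵐ x ∂μ, s x = 0 → r x = 0) :
    ∀ᵐ x ∂μ, (p x - r x) * (r x ^ t - s x ^ t) = (p x - r x) * (A x - B x) := by
  filter_upwards [hpr, hrs] with x hpx hrx
  by_cases hr0 : r x = 0
  · simp [hr0, hpx hr0]
  have hs0 : s x ≠ 0 := fun hs0 => hr0 (hrx hs0)
  rw [rpow_eq_of_eq_max_zero_rpow ht (hr x) hr0, rpow_eq_of_eq_max_zero_rpow ht (hs x) hs0]

theorem MeasureTheory.Integrable.continuous_mul_of_isBounded_support {E : Type*}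
    [NormedAddCommGroup E] [ProperSpace E] [MeasurableSpace E] [OpensMeasurableSpace E] {μ : Measure E} {f g : E → ℝ}
    (hf : Integrable f μ) (hsupp : Bornology.IsBounded (Function.support f))
    (hg : Continuous g) : Integrable (fun x => g x * f x) μ := by
  obtain ⟨C, hC⟩ := hsupp.isCompact_closure.exists_bound_of_continuousOn hg.continuousOn
  refine (hf.norm.const_mul (max C 0)).mono' (hg.aestronglyMeasurable.mul hf.1)
    (Filter.Eventually.of_forall fun x => ?_)
  rw [norm_mul]
  by_cases hx : f x = 0
  · simp [hx]
  · exact mul_le_mul_of_nonneg_right ((hC x (subset_closure hx)).trans (le_max_left _ _))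
      (norm_nonneg _)

section

variable {ι : Type*} [Fintype ι]

theorem Matrix.PosDef.exists_pos_mul_sq_norm_le {M : Matrix ι ι ℝ}
    (hM : M.PosDef) : ∃ lam > 0, ∀ x : ι → ℝ, lam * ‖x‖ ^ 2 ≤ x ⬝ᵥ M *ᵥ x := by
  have hQ : Continuous fun x : ι → ℝ => x ⬝ᵥ M *ᵥ x := by fun_prop
  obtain ⟨lam, hlam, hsphere⟩ := (isCompact_sphere (0 : ι → ℝ) 1).exists_forall_le'
    hQ.continuousOn fun y hy => hM.dotProduct_mulVec_pos (ne_zero_of_mem_unit_sphere ⟨y, hy⟩)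
  refine ⟨lam, hlam, fun x => ?_⟩
  rcases eq_or_ne x 0 with rfl | hx
  · simp
  have hnorm : 0 < ‖x‖ := norm_pos_iff.mpr hx
  have hunit : ‖x‖⁻¹ • x ∈ Metric.sphere (0 : ι → ℝ) 1 := by
    simp [norm_smul, hnorm.ne']
  have := hsphere _ hunit
  simp only [mulVec_smul, smul_dotProduct, dotProduct_smul, smul_eq_mul] at this
  calc lam * ‖x‖ ^ 2 ≤ (‖x‖⁻¹ * (‖x‖⁻¹ * (x ⬝ᵥ M *ᵥ x))) * ‖x‖ ^ 2 := by gcongr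
    _ = x ⬝ᵥ M *ᵥ x := by field_simp

theorem abs_dotProduct_le (θ x : ι → ℝ) :
    |θ ⬝ᵥ x| ≤ (∑ i, |θ i|) * ‖x‖ := by
  rw [Finset.sum_mul]
  refine (Finset.abs_sum_le_sum_abs _ _).trans (Finset.sum_le_sum fun i _ => ?_)
  rw [abs_mul]
  gcongr
  exact norm_le_pi_norm x i

theorem isBounded_setOf_pos_quadratic {c t : ℝ} (ht : 0 < t)
    (θ : ι → ℝ) {Θ : Matrix ι ι ℝ} (hΘ : (-Θ).PosDef) :
    Bornology.IsBounded {x : ι → ℝ | 0 < c + t * (θ ⬝ᵥ x + x ⬝ᵥ Θ *ᵥ x)} := by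
  obtain ⟨lam, hlam, hcoer⟩ := hΘ.exists_pos_mul_sq_norm_le
  set K := ∑ i, |θ i|
  have hK : 0 ≤ K := by positivity
  refine isBounded_iff_forall_norm_le.mpr ⟨(|c| + t * K + t * lam) / (t * lam), fun x hx => ?_⟩
  have hlin := (le_abs_self _).trans (abs_dotProduct_le θ x)
  have hquad : lam * ‖x‖ ^ 2 ≤ -(x ⬝ᵥ Θ *ᵥ x) := by
    simpa [neg_mulVec, dotProduct_neg] using hcoer x
  have hnorm_sq : t * lam * ‖x‖ ^ 2 < |c| + t * K * ‖x‖ := by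
    nlinarith [le_abs_self c, mul_le_mul_of_nonneg_left hlin ht.le,
      mul_le_mul_of_nonneg_left hquad ht.le, hx.out]
  rw [le_div_iff₀ (by positivity)]
  nlinarith [norm_nonneg x, mul_pos ht hlam, abs_nonneg c]

theorem dotProduct_mulVec_self_eq_sum (Θ : Matrix ι ι ℝ) (x : ι → ℝ) :
    x ⬝ᵥ Θ *ᵥ x = ∑ i, ∑ j, Θ i j * (x i * x j) := by
  simp only [dotProduct, mulVec, Finset.mul_sum]
  exact Finset.sum_congr rfl fun i _ => Finset.sum_congr rfl fun j _ => by ring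

theorem integral_quadratic_mul [MeasurableSpace (ι → ℝ)]
    {μ : Measure (ι → ℝ)} {h : (ι → ℝ) → ℝ} (h0 : Integrable h μ)
    (h1 : ∀ i, Integrable (fun x => x i * h x) μ)
    (h2 : ∀ i j, Integrable (fun x => x i * x j * h x) μ)
    (c t : ℝ) (θ : ι → ℝ) (Θ : Matrix ι ι ℝ) :
    ∫ x, (c + t * (θ ⬝ᵥ x + x ⬝ᵥ Θ *ᵥ x)) * h x ∂μ
      = c * ∫ x, h x ∂μ + t * (∑ i, θ i * ∫ x, x i * h x ∂μ
          + ∑ i, ∑ j, Θ i j * ∫ x, x i * x j * h x ∂μ) := by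
  have hexpand : ∀ x, (c + t * (θ ⬝ᵥ x + x ⬝ᵥ Θ *ᵥ x)) * h x
      = c * h x + t * (∑ i, θ i * (x i * h x) + ∑ i, ∑ j, Θ i j * (x i * x j * h x)) := by
    intro x
    rw [dotProduct_mulVec_self_eq_sum]
    simp only [dotProduct, add_mul, Finset.sum_mul, mul_assoc]
  have hI1 : Integrable (fun x => ∑ i, θ i * (x i * h x)) μ :=
    integrable_finsetSum _ fun i _ => (h1 i).const_mul _
  have hI2 : ∀ i, Integrable (fun x => ∑ j, Θ i j * (x i * x j * h x)) μ := fun i =>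
    integrable_finsetSum _ fun j _ => (h2 i j).const_mul _
  have hI12 : Integrable (fun x => ∑ i, θ i * (x i * h x)
      + ∑ i, ∑ j, Θ i j * (x i * x j * h x)) μ :=
    hI1.add (integrable_finsetSum _ fun i _ => hI2 i)
  simp_rw [hexpand]
  rw [integral_add (h0.const_mul c) (hI12.const_mul t), integral_const_mul, integral_const_mul,
    integral_add hI1 (integrable_finsetSum _ fun i _ => hI2 i),
    integral_finsetSum _ fun i _ => (h1 i).const_mul _, integral_finsetSum _ fun i _ => hI2 i]
  simp_rw [integral_finsetSum _ fun j _ => (h2 _ j).const_mul _, integral_const_mul]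

theorem integral_quadratic_mul_sub_eq_zero [MeasurableSpace (ι → ℝ)]
    {μ : Measure (ι → ℝ)} {f g : (ι → ℝ) → ℝ}
    (hf0 : Integrable f μ) (hf1 : ∀ i, Integrable (fun x => x i * f x) μ)
    (hf2 : ∀ i j, Integrable (fun x => x i * x j * f x) μ)
    (hg0 : Integrable g μ) (hg1 : ∀ i, Integrable (fun x => x i * g x) μ)
    (hg2 : ∀ i j, Integrable (fun x => x i * x j * g x) μ)
    (hmass : ∫ x, f x ∂μ = ∫ x, g x ∂μ)
    (hmom1 : ∀ i, ∫ x, x i * f x ∂μ = ∫ x, x i * g x ∂μ)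
    (hmom2 : ∀ i j, ∫ x, x i * x j * f x ∂μ = ∫ x, x i * x j * g x ∂μ)
    (c t : ℝ) (θ : ι → ℝ) (Θ : Matrix ι ι ℝ) :
    ∫ x, (c + t * (θ ⬝ᵥ x + x ⬝ᵥ Θ *ᵥ x)) * (f x - g x) ∂μ = 0 := by
  have h1 : ∀ i, Integrable (fun x => x i * (f x - g x)) μ := fun i => by
    simp_rw [mul_sub]; exact (hf1 i).sub (hg1 i)
  have h2 : ∀ i j, Integrable (fun x => x i * x j * (f x - g x)) μ := fun i j => by
    simp_rw [mul_sub]; exact (hf2 i j).sub (hg2 i j)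
  rw [integral_quadratic_mul (h := fun x => f x - g x) (hf0.sub hg0) h1 h2,
    integral_sub hf0 hg0, hmass, sub_self]
  simp_rw [mul_sub]
  simp [integral_sub (hf1 _) (hg1 _), integral_sub (hf2 _ _) (hg2 _ _), hmom1, hmom2]

end

theorem triangular_equality_m_projection_general (n : ℕ) (m q : ℝ)
    (hm1 : 1 < m) (hq : q = 2 - m)
    (p r s : (Fin n → ℝ) → ℝ)
    -- p is a probability density with finite first and second moments and ∫ p^m < ∞
    (hp_int : Integrable p) (hp_mass : ∫ x, p x = 1)
    (hp_mom1_int : ∀ i, Integrable (fun x => x i * p x))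
    (hp_mom2_int : ∀ i j, Integrable (fun x => x i * x j * p x))
    -- r is a q-Gaussian density
    (c₁ : ℝ) (θ₁ : Fin n → ℝ) (Θ₁ : Matrix (Fin n) (Fin n) ℝ)
    (hΘ₁neg : (-Θ₁).PosDef)
    (hr : ∀ x, r x = max 0 (c₁ + (1 - q) * (θ₁ ⬝ᵥ x + x ⬝ᵥ Θ₁.mulVec x)) ^ (1 / (1 - q)))
    (hr_int : Integrable r) (hr_mass : ∫ x, r x = 1)
    -- r has the same first and second moments as p (r is the m-projection of p)
    (hmom1 : ∀ i, (∫ x, x i * p x) = ∫ x, x i * r x)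
    (hmom2 : ∀ i j, (∫ x, x i * x j * p x) = ∫ x, x i * x j * r x)
    -- p vanishes a.e. outside the support of r
    (hpr_supp : ∀ᵐ x ∂volume, r x = 0 → p x = 0)
    -- s is a q-Gaussian density
    (c₂ : ℝ) (θ₂ : Fin n → ℝ) (Θ₂ : Matrix (Fin n) (Fin n) ℝ)
    (hs : ∀ x, s x = max 0 (c₂ + (1 - q) * (θ₂ ⬝ᵥ x + x ⬝ᵥ Θ₂.mulVec x)) ^ (1 / (1 - q)))
    -- p and r vanish a.e. outside the support of s
    (hrs_supp : ∀ᵐ x ∂volume, s x = 0 → r x = 0)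
    -- all relevant integrals are finite
    (hps_int : Integrable (fun x =>
      (s x ^ (2 - q) - p x ^ (2 - q)) / (2 - q)
        - p x * (s x ^ (1 - q) - p x ^ (1 - q)) / (1 - q)))
    (hpr_int : Integrable (fun x =>
      (r x ^ (2 - q) - p x ^ (2 - q)) / (2 - q)
        - p x * (r x ^ (1 - q) - p x ^ (1 - q)) / (1 - q)))
    (hrs_int : Integrable (fun x =>
      (s x ^ (2 - q) - r x ^ (2 - q)) / (2 - q)
        - r x * (s x ^ (1 - q) - r x ^ (1 - q)) / (1 - q))) :
    BregmanDiv n q p s = BregmanDiv n q p r + BregmanDiv n q r s := by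
  have ht : 0 < 1 - q := by rw [hq]; linarith
  have hr_supp : Bornology.IsBounded (Function.support r) :=
    (isBounded_setOf_pos_quadratic ht θ₁ hΘ₁neg).subset
      fun x hx => pos_of_eq_max_zero_rpow ht.ne' (hr x) hx
  have hr_mom1 : ∀ i, Integrable (fun x => x i * r x) := fun i =>
    hr_int.continuous_mul_of_isBounded_support hr_supp (by fun_prop)
  have hr_mom2 : ∀ i j, Integrable (fun x => x i * x j * r x) := fun i j =>
    hr_int.continuous_mul_of_isBounded_support hr_supp (by fun_prop)
  have hdefect : ∫ x, (p x - r x) * (r x ^ (1 - q) - s x ^ (1 - q)) = 0 :=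
    calc ∫ x, (p x - r x) * (r x ^ (1 - q) - s x ^ (1 - q))
        = ∫ x, (c₁ - c₂ + (1 - q) * ((θ₁ - θ₂) ⬝ᵥ x + x ⬝ᵥ (Θ₁ - Θ₂) *ᵥ x)) * (p x - r x) :=
          integral_congr_ae <| (ae_sub_mul_rpow_sub_eq ht.ne' hr hs hpr_supp hrs_supp).mono
            fun x hx => by
              beta_reduce
              rw [hx, mul_comm, sub_dotProduct, sub_mulVec, dotProduct_sub]
              ring
      _ = 0 := integral_quadratic_mul_sub_eq_zero hp_int hp_mom1_int hp_mom2_int hr_int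
          hr_mom1 hr_mom2 (hp_mass.trans hr_mass.symm) hmom1 hmom2 _ _ _ _
  have hsplit := bregmanDiv_sub_sub_eq_integral hps_int hpr_int hrs_int
  rw [integral_div, hdefect, zero_div] at hsplit
  linarith

/-- Triangular (generalized Pythagorean) equality for the m-projection onto the
q-Gaussian family: if `r` is a q-Gaussian with the same first and second moments as `p`
and `s` is any q-Gaussian (with suitable support and integrability conditions), then
`𝔇[p‖s] = 𝔇[p‖r] + 𝔇[r‖s]`. -/
theorem triangular_equality_m_projection (n : ℕ) (m q : ℝ)
    (hm1 : 1 < m) (hm2 : m < 2) (hq : q = 2 - m)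
    (p r s : (Fin n → ℝ) → ℝ)
    -- p is a probability density with finite first and second moments and ∫ p^m < ∞
    (hp_nonneg : ∀ x, 0 ≤ p x) (hp_int : Integrable p) (hp_mass : ∫ x, p x = 1)
    (hpm_int : Integrable (fun x => p x ^ m))
    (hp_mom1_int : ∀ i, Integrable (fun x => x i * p x))
    (hp_mom2_int : ∀ i j, Integrable (fun x => x i * x j * p x))
    -- r is a q-Gaussian density
    (c₁ : ℝ) (θ₁ : Fin n → ℝ) (Θ₁ : Matrix (Fin n) (Fin n) ℝ)
    (hΘ₁symm : Θ₁.IsSymm) (hΘ₁neg : (-Θ₁).PosDef)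
    (hr : ∀ x, r x = max 0 (c₁ + (1 - q) * (θ₁ ⬝ᵥ x + x ⬝ᵥ Θ₁.mulVec x)) ^ (1 / (1 - q)))
    (hr_int : Integrable r) (hr_mass : ∫ x, r x = 1)
    -- r has the same first and second moments as p (r is the m-projection of p)
    (hmom1 : ∀ i, (∫ x, x i * p x) = ∫ x, x i * r x)
    (hmom2 : ∀ i j, (∫ x, x i * x j * p x) = ∫ x, x i * x j * r x)
    -- p vanishes a.e. outside the support of r
    (hpr_supp : ∀ᵐ x ∂volume, r x = 0 → p x = 0)
    -- s is a q-Gaussian density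
    (c₂ : ℝ) (θ₂ : Fin n → ℝ) (Θ₂ : Matrix (Fin n) (Fin n) ℝ)
    (hΘ₂symm : Θ₂.IsSymm) (hΘ₂neg : (-Θ₂).PosDef)
    (hs : ∀ x, s x = max 0 (c₂ + (1 - q) * (θ₂ ⬝ᵥ x + x ⬝ᵥ Θ₂.mulVec x)) ^ (1 / (1 - q)))
    (hs_int : Integrable s) (hs_mass : ∫ x, s x = 1)
    -- p and r vanish a.e. outside the support of s
    (hps_supp : ∀ᵐ x ∂volume, s x = 0 → p x = 0)
    (hrs_supp : ∀ᵐ x ∂volume, s x = 0 → r x = 0)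
    -- all relevant integrals are finite
    (hrm_int : Integrable (fun x => r x ^ m))
    (hsm_int : Integrable (fun x => s x ^ m))
    (hps_int : Integrable (fun x =>
      (s x ^ (2 - q) - p x ^ (2 - q)) / (2 - q)
        - p x * (s x ^ (1 - q) - p x ^ (1 - q)) / (1 - q)))
    (hpr_int : Integrable (fun x =>
      (r x ^ (2 - q) - p x ^ (2 - q)) / (2 - q)
        - p x * (r x ^ (1 - q) - p x ^ (1 - q)) / (1 - q)))
    (hrs_int : Integrable (fun x =>
      (s x ^ (2 - q) - r x ^ (2 - q)) / (2 - q)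
        - r x * (s x ^ (1 - q) - r x ^ (1 - q)) / (1 - q))) :
    BregmanDiv n q p s = BregmanDiv n q p r + BregmanDiv n q r s :=
  triangular_equality_m_projection_general n m q hm1 hq p r s hp_int hp_mass hp_mom1_int hp_mom2_int
    c₁ θ₁ Θ₁ hΘ₁neg hr hr_int hr_mass hmom1 hmom2 hpr_supp c₂ θ₂ Θ₂ hs hrs_supp hps_int hpr_int
    hrs_int
end
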